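/- Let d ≥ 1 and k ≥ 0 be integers and let α, β, c > 0 satisfy α > d and αβ > (k+1)d. Then ∫_{ℝ^d} ∫₁^∞ (1 − exp(−c w / ‖x‖^α)) · w^{kd/α} · β w^{−β−1} dw dx = θ_d · (αβ/(αβ − (k+1)d)) · c^{d/α} · Γ(1 − d/α). In particular, this weighted integral is bounded by a constant multiple of c^{d/α}. -/

import Mathlib

/-!
For fixed `w`, the layer-cake formula with `g = exp (-·)` turns the `x`-integral of
`1 - exp (-(c w / ‖x‖ ^ α))` into `∫ t > 0, vol {x | t ≤ c w / ‖x‖ ^ α} e^{-t} dt`. The superlevel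
sets are punctured balls of radius `(c w / t) ^ (1 / α)`, so by scaling this is
`θ_d (c w) ^ (d / α) ∫ t ^ (-d / α) e^{-t} dt = θ_d (c w) ^ (d / α) Γ(1 - d / α)`.
What remains in `w` is a pure power, integrable on `(1, ∞)` because `α β > (k + 1) d`.
Everything is nonnegative, so the computation runs with lower Lebesgue integrals, where Tonelli
swaps the two integrals without any integrability bookkeeping.
-/

open MeasureTheory Set Real Filter Module Metric

theorem one_sub_exp_neg_nonneg {t : ℝ} (ht : 0 ≤ t) : 0 ≤ 1 - exp (-t) :=
  sub_nonneg.2 (exp_le_one_iff.2 (neg_nonpos.2 ht))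

theorem intervalIntegral_exp_neg (y : ℝ) : ∫ t in (0 : ℝ)..y, exp (-t) = 1 - exp (-y) := by
  simp [intervalIntegral.integral_comp_neg (fun t => exp t)]

theorem ofReal_Gamma_eq_lintegral {a : ℝ} (ha : 0 < a) :
    ENNReal.ofReal (Gamma a) = ∫⁻ t in Ioi 0, ENNReal.ofReal (exp (-t) * t ^ (a - 1)) := by
  rw [Gamma_eq_integral ha, ofReal_integral_eq_lintegral_ofReal (GammaIntegral_convergent ha)]
  filter_upwards [ae_restrict_mem measurableSet_Ioi] with t (ht : 0 < t)
  positivity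

theorem lintegral_Ioi_rpow_of_lt {q a : ℝ} (hq : q < -1) (ha : 0 < a) :
    ∫⁻ t in Ioi a, ENNReal.ofReal (t ^ q) = ENNReal.ofReal (-a ^ (q + 1) / (q + 1)) := by
  rw [← integral_Ioi_rpow_of_lt hq ha,
    ofReal_integral_eq_lintegral_ofReal (integrableOn_Ioi_rpow_of_lt hq ha)]
  filter_upwards [ae_restrict_mem measurableSet_Ioi] with t (ht : a < t)
  exact rpow_nonneg (ha.trans ht).le _

theorem integral_integral_eq_toReal_lintegral_lintegral_swap {α β : Type*} [MeasurableSpace α]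
    [MeasurableSpace β] {μ : Measure α} {ν : Measure β} [SFinite μ] [SFinite ν] {f : α → β → ℝ}
    (hf : Measurable (Function.uncurry f)) (hf_nonneg : ∀ x, 0 ≤ᵐ[ν] f x)
    (hfin : ∫⁻ y, ∫⁻ x, ENNReal.ofReal (f x y) ∂μ ∂ν ≠ ⊤) :
    ∫ x, ∫ y, f x y ∂ν ∂μ = (∫⁻ y, ∫⁻ x, ENNReal.ofReal (f x y) ∂μ ∂ν).toReal := by
  have hinner : Measurable fun x => ∫⁻ y, ENNReal.ofReal (f x y) ∂ν :=
    hf.ennreal_ofReal.lintegral_prod_right'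
  rw [← lintegral_lintegral_swap hf.ennreal_ofReal.aemeasurable] at hfin ⊢
  simp_rw [integral_eq_lintegral_of_nonneg_ae (hf_nonneg _)
    hf.of_uncurry_left.aestronglyMeasurable]
  exact integral_toReal hinner.aemeasurable (ae_lt_top hinner hfin)

section AddHaar

variable {E : Type*} [NormedAddCommGroup E] [NormedSpace ℝ E] [FiniteDimensional ℝ E]
  [Nontrivial E] [MeasurableSpace E] [BorelSpace E] (μ : Measure E) [μ.IsAddHaarMeasure]

theorem addHaar_setOf_le_div_norm_rpow {α b t : ℝ} (hα : 0 < α) (hb : 0 < b) (ht : 0 < t) :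
    μ {x | t ≤ b / ‖x‖ ^ α} =
      ENNReal.ofReal ((b / t) ^ (finrank ℝ E / α)) * μ (closedBall 0 1) := by
  have hbt : 0 < b / t := div_pos hb ht
  -- at `x = 0` the quotient is the junk value `b / 0 = 0 < t`
  have hset : {x : E | t ≤ b / ‖x‖ ^ α} = closedBall 0 ((b / t) ^ α⁻¹) \ {0} := by
    ext x
    rcases eq_or_ne x 0 with rfl | hx
    · simp [zero_rpow hα.ne', ht.not_ge]
    simp only [mem_ofPred_eq, Set.mem_sdiff, mem_closedBall, dist_zero_right, mem_singleton_iff,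
      hx, not_false_eq_true, and_true]
    rw [le_div_iff₀ (rpow_pos_of_pos (norm_pos_iff.mpr hx) _), ← le_div_iff₀' ht,
      ← rpow_le_rpow_iff (norm_nonneg x) (rpow_nonneg hbt.le _) hα, ← rpow_mul hbt.le,
      inv_mul_cancel₀ hα.ne', rpow_one]
  rw [hset, measure_sdiff_null (measure_singleton 0),
    Measure.addHaar_closedBall' μ 0 (rpow_nonneg hbt.le _), ← rpow_natCast, ← rpow_mul hbt.le,
    inv_mul_eq_div]

theorem lintegral_one_sub_exp_neg_div_norm_rpow {α b : ℝ} (hα : (finrank ℝ E : ℝ) < α)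
    (hb : 0 < b) :
    ∫⁻ x, ENNReal.ofReal (1 - exp (-(b / ‖x‖ ^ α))) ∂μ =
      ENNReal.ofReal ((μ (closedBall 0 1)).toReal * b ^ (finrank ℝ E / α) *
        Gamma (1 - finrank ℝ E / α)) := by
  set s : ℝ := finrank ℝ E / α
  have hα0 : 0 < α := lt_of_le_of_lt (Nat.cast_nonneg _) hα
  have hs : s < 1 := (div_lt_one hα0).mpr hα
  simp_rw [← intervalIntegral_exp_neg]
  rw [lintegral_comp_eq_lintegral_meas_le_mul μ (ae_of_all _ fun x => by positivity)
    (g := fun t => exp (-t)) (by fun_prop)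
    (fun _ _ => by apply Continuous.intervalIntegrable; fun_prop)
    (ae_of_all _ fun t => (exp_pos _).le)]
  calc ∫⁻ t in Ioi 0, μ {x | t ≤ b / ‖x‖ ^ α} * ENNReal.ofReal (exp (-t))
      = ∫⁻ t in Ioi 0, ENNReal.ofReal ((μ (closedBall 0 1)).toReal * b ^ s) *
          ENNReal.ofReal (exp (-t) * t ^ ((1 - s) - 1)) := by
        refine setLIntegral_congr_fun measurableSet_Ioi fun t (ht : 0 < t) => ?_
        rw [addHaar_setOf_le_div_norm_rpow μ hα0 hb ht]
        conv_lhs => rw [← ENNReal.ofReal_toReal (measure_closedBall_lt_top (μ := μ)).ne]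
        rw [← ENNReal.ofReal_mul (by positivity), ← ENNReal.ofReal_mul (by positivity),
          ← ENNReal.ofReal_mul (by positivity), div_rpow hb.le ht.le, sub_sub_cancel_left,
          rpow_neg ht.le, div_eq_mul_inv]
        congr 1
        ring
    _ = ENNReal.ofReal ((μ (closedBall 0 1)).toReal * b ^ s * Gamma (1 - s)) := by
        rw [lintegral_const_mul' _ _ ENNReal.ofReal_ne_top,
          ← ofReal_Gamma_eq_lintegral (by linarith), ← ENNReal.ofReal_mul (by positivity)]

theorem lintegral_Ioi_one_lintegral_weighted_pareto_connection {α β c p : ℝ}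
    (hα : (finrank ℝ E : ℝ) < α) (hβ : 0 ≤ β) (hc : 0 < c) (hp : finrank ℝ E / α + p < β) :
    ∫⁻ w in Ioi 1, ∫⁻ x, ENNReal.ofReal
        ((1 - exp (-(c * w / ‖x‖ ^ α))) * w ^ p * (β * w ^ (-β - 1))) ∂μ =
      ENNReal.ofReal ((μ (closedBall 0 1)).toReal * Gamma (1 - finrank ℝ E / α) *
        c ^ (finrank ℝ E / α) * (β / (β - (finrank ℝ E / α + p)))) := by
  set s : ℝ := finrank ℝ E / α
  set K : ℝ := (μ (closedBall 0 1)).toReal * Gamma (1 - s) * c ^ s * β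
  have hΓ : 0 < Gamma (1 - s) :=
    Gamma_pos_of_pos (by linarith [(div_lt_one (lt_of_le_of_lt (Nat.cast_nonneg _) hα)).mpr hα])
  have hK : 0 ≤ K := by positivity
  have hslice : ∀ w : ℝ, 0 < w → ∫⁻ x, ENNReal.ofReal
      ((1 - exp (-(c * w / ‖x‖ ^ α))) * w ^ p * (β * w ^ (-β - 1))) ∂μ =
        ENNReal.ofReal (K * w ^ (s + p - β - 1)) := by
    intro w hw
    have hweight : 0 ≤ w ^ p * (β * w ^ (-β - 1)) := by positivity
    simp_rw [mul_assoc (1 - exp _), ENNReal.ofReal_mul' hweight]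
    rw [lintegral_mul_const' _ _ ENNReal.ofReal_ne_top,
      lintegral_one_sub_exp_neg_div_norm_rpow μ hα (mul_pos hc hw),
      ← ENNReal.ofReal_mul (by positivity), show s + p - β - 1 = s + (p + (-β - 1)) by ring,
      rpow_add hw, rpow_add hw, mul_rpow hc.le hw.le]
    congr 1
    ring
  rw [setLIntegral_congr_fun measurableSet_Ioi fun w (hw : 1 < w) => hslice w (one_pos.trans hw)]
  simp_rw [ENNReal.ofReal_mul hK]
  rw [lintegral_const_mul' _ _ ENNReal.ofReal_ne_top,
    lintegral_Ioi_rpow_of_lt (by linarith) one_pos, one_rpow, ← ENNReal.ofReal_mul hK,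
    show s + p - β - 1 + 1 = -(β - (s + p)) by ring, neg_div_neg_eq]
  congr 1
  simp only [K]
  ring

end AddHaar

theorem integral_weighted_pareto_connection_function
    (d k : ℕ) (hd : 1 ≤ d) (α β c : ℝ)
    (hα : 0 < α) (hβ : 0 < β) (hc : 0 < c)
    (hαd : (d : ℝ) < α) (hαβ : ((k : ℝ) + 1) * d < α * β) :
    ∫ x : EuclideanSpace ℝ (Fin d),
        ∫ w in Ioi (1 : ℝ),
          (1 - Real.exp (-(c * w / ‖x‖ ^ α))) * w ^ ((k : ℝ) * d / α) * (β * w ^ (-β - 1)) =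
      (volume (Metric.closedBall (0 : EuclideanSpace ℝ (Fin d)) 1)).toReal *
        (α * β / (α * β - ((k : ℝ) + 1) * d)) * c ^ ((d : ℝ) / α) *
          Real.Gamma (1 - (d : ℝ) / α) := by
  have : Nonempty (Fin d) := Fin.pos_iff_nonempty.mp hd
  have hfinrank : finrank ℝ (EuclideanSpace ℝ (Fin d)) = d := finrank_euclideanSpace_fin
  have hαβ' : (d : ℝ) / α + k * d / α < β := by
    rw [← add_div, div_lt_iff₀ hα]
    linarith
  have hpos : 0 < β / (β - (d / α + k * d / α)) := div_pos hβ (by linarith)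
  have hΓ : 0 < Gamma (1 - d / α) := Gamma_pos_of_pos (by linarith [(div_lt_one hα).mpr hαd])
  have hdouble := lintegral_Ioi_one_lintegral_weighted_pareto_connection volume
    (α := α) (p := k * d / α) (by rwa [hfinrank]) hβ.le hc (by rwa [hfinrank])
  rw [hfinrank] at hdouble
  rw [integral_integral_eq_toReal_lintegral_lintegral_swap (by fun_prop) ?_ (by simp [hdouble]),
    hdouble, ENNReal.toReal_ofReal (by positivity)]
  · field_simp
    ring
  · intro x
    filter_upwards [ae_restrict_mem measurableSet_Ioi] with w (hw : 1 < w)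
    have := one_sub_exp_neg_nonneg (t := c * w / ‖x‖ ^ α) (by positivity)
    positivity
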